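/- arXiv:2201.06144 — 2 statements merged into one kernel-verified Lean document; each statement's English description precedes it below -/
import Mathlib

section
/- (Partite Construction) Let 𝒞 and 𝒟 be categories and let G : 𝒟 → 𝒞 be a functor such that: (1) Hom_𝒞(X, Y) is finite for all objects X, Y of 𝒞, and Hom_𝒟(K, L) is finite for all objects K, L of 𝒟; (2) G(f) has a left inverse in 𝒞 for every f ∈ Hom(𝒟); (3) 𝒞 has a colimit over every functor F : J → 𝒞 where Ob(J) is finite; (4) 𝒟 has the Ramsey property. Fix a 𝒞-language ℒ. Then for any integer r > 0, any monic 𝒟-block 𝚇 ∈ Ob(Bl^m_𝒟), and any 𝒟-block 𝚈 ∈ Ob(Bl^m_𝒟), there exists a 𝒟-block 𝚉 ∈ Ob(Bl^m_𝒟) such that 𝚉 → (𝚈)^𝚇_r in the category Bl^m_𝒟. -/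
open CategoryTheory

universe v u v' u'

/-- A `𝒞`-language: a set of relation symbols with arities objects of `𝒞`, and a set of
function symbols with arities pairs of objects of `𝒞`. -/
structure CLanguage (C : Type u) [Category.{v} C] where
  Rel : Type
  Fn : Type
  arR : Rel → C
  arF1 : Fn → C
  arF2 : Fn → C

/-- An `ℒ`-structure: an object `X` of `𝒞` with `R^𝖷 ⊆ Hom(r, X)` for each relation
symbol `R` of arity `r`, and `F^𝖷 : Hom(X, r) → Hom(X, s)` for each function symbol `F`
of arity `(r, s)`. -/
structure LStr {C : Type u} [Category.{v} C] (L : CLanguage C) where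
  X : C
  rel : ∀ R : L.Rel, Set (L.arR R ⟶ X)
  fn : ∀ F : L.Fn, (X ⟶ L.arF1 F) → (X ⟶ L.arF2 F)

/-- `f : A.X ⟶ B.X` is an `ℒ`-homomorphism: `R^𝖠(η) ⟺ R^𝖡(f ∘ η)` and
`F^𝖠(γ ∘ f) = F^𝖡(γ) ∘ f`. -/
def IsLHom {C : Type u} [Category.{v} C] {L : CLanguage C} (A B : LStr L)
    (f : A.X ⟶ B.X) : Prop :=
  (∀ (R : L.Rel) (η : L.arR R ⟶ A.X), η ∈ A.rel R ↔ (η ≫ f) ∈ B.rel R) ∧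
  (∀ (F : L.Fn) (γ : B.X ⟶ L.arF1 F), A.fn F (f ≫ γ) = f ≫ B.fn F γ)

/-- `f` has a left inverse in `𝒞`. -/
def HasLeftInv {C : Type u} [Category.{v} C] {X Y : C} (f : X ⟶ Y) : Prop :=
  ∃ g : Y ⟶ X, f ≫ g = 𝟙 X

/-- A `𝒟`-block (an object of `Bl^m_𝒟`): a triple `(𝖷, π, K)` with `𝖷` an
`ℒ`-structure, `K ∈ Ob(𝒟)` and `π : X ⟶ G(K)` in `𝒞`. -/
structure DBlock {C : Type u} [Category.{v} C] {D : Type u'} [Category.{v'} D]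
    (L : CLanguage C) (G : D ⥤ C) where
  S : LStr L
  K : D
  π : S.X ⟶ G.obj K

/-- `f` is a morphism of `Bl^m_𝒟` from `(𝖷, π, K)` to `(𝖸, ρ, L)`: an
`ℒ`-homomorphism with a left inverse in `𝒞` such that `ρ ∘ f = G(i) ∘ π` for some
`i : K ⟶ L` in `𝒟`. -/
def DBlockHom {C : Type u} [Category.{v} C] {D : Type u'} [Category.{v'} D]
    {L : CLanguage C} {G : D ⥤ C} (A B : DBlock L G) (f : A.S.X ⟶ B.S.X) : Prop :=
  IsLHom A.S B.S f ∧ HasLeftInv f ∧ ∃ i : A.K ⟶ B.K, f ≫ B.π = A.π ≫ G.map i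

/-!
For a split trace `τ : X ⟶ W`, let `A` be the finite set of embeddings of `X` into `P` over `τ`
and `ι` a Hales–Jewett dimension for colorings of the cube `ι → A`. Glue one copy of `P` for each
combinatorial line `l`, identifying the copy `a` of `X` in it with a copy of `X` indexed by the
word `l a`. A coloring of the copies of `X` is then a coloring of the cube, so some line gives a
copy of `P` in which all copies of `X` over `τ` have one color. Since `τ` splits, each coordinate
`d` of the cube retracts the amalgam onto `P` (collapsing the lines constant at `d` onto a copy
of `X`), and these retractions show that the copies of `P` are embeddings.

Iterating over the traces `X.π ≫ G(i)`, starting from a disjoint union of copies of `Y` indexed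
by `j : Y.K ⟶ K₀` with `K₀ → (Y.K)^(X.K)_r`, the color of `f` followed by the copy `j`, for a
block morphism `f : 𝚇 → 𝚈` over `i`, depends only on `i ≫ j`, and the Ramsey property of `𝒟`
picks `j` making it constant.
-/

open Combinatorics CategoryTheory.Limits

section Embeddings

variable {C : Type u} [Category.{v} C]

lemma HasLeftInv.id (X : C) : HasLeftInv (𝟙 X) := ⟨𝟙 X, Category.id_comp _⟩

lemma HasLeftInv.comp {X Y Z : C} {f : X ⟶ Y} {g : Y ⟶ Z} (hf : HasLeftInv f)
    (hg : HasLeftInv g) : HasLeftInv (f ≫ g) := by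
  obtain ⟨f', hf'⟩ := hf
  obtain ⟨g', hg'⟩ := hg
  exact ⟨g' ≫ f', by simp [reassoc_of% hg', hf']⟩

lemma eq_of_comp_eq_of_retraction {T P M : C} {η η' : T ⟶ P} {f g : P ⟶ M} {q : M ⟶ P}
    (hf : f ≫ q = 𝟙 P) (hg : g ≫ q = 𝟙 P) (h : η ≫ f = η' ≫ g) : η = η' := by
  simpa [hf, hg] using congrArg (· ≫ q) h

variable {L : CLanguage C}

lemma IsLHom.id (A : LStr L) : IsLHom A A (𝟙 A.X) :=
  ⟨fun _ _ => by simp, fun _ _ => by simp⟩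

lemma IsLHom.comp {A B B' : LStr L} {f : A.X ⟶ B.X} {g : B.X ⟶ B'.X}
    (hf : IsLHom A B f) (hg : IsLHom B B' g) : IsLHom A B' (f ≫ g) :=
  ⟨fun R η => by rw [hf.1, hg.1, Category.assoc],
    fun F γ => by rw [Category.assoc, hf.2, hg.2, Category.assoc]⟩

def IsEmbeddingOver {W : C} (P Q : LStr L) (πP : P.X ⟶ W) (πQ : Q.X ⟶ W) (u : P.X ⟶ Q.X) :
    Prop :=
  IsLHom P Q u ∧ HasLeftInv u ∧ u ≫ πQ = πP

lemma IsEmbeddingOver.id {W : C} (P : LStr L) (πP : P.X ⟶ W) :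
    IsEmbeddingOver P P πP πP (𝟙 P.X) :=
  ⟨IsLHom.id P, HasLeftInv.id P.X, Category.id_comp πP⟩

lemma IsEmbeddingOver.comp {W : C} {P Q R : LStr L} {πP : P.X ⟶ W} {πQ : Q.X ⟶ W}
    {πR : R.X ⟶ W} {u : P.X ⟶ Q.X} {v : Q.X ⟶ R.X} (hu : IsEmbeddingOver P Q πP πQ u)
    (hv : IsEmbeddingOver Q R πQ πR v) : IsEmbeddingOver P R πP πR (u ≫ v) :=
  ⟨hu.1.comp hv.1, hu.2.1.comp hv.2.1, by rw [Category.assoc, hv.2.2, hu.2.2]⟩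

end Embeddings

section Glue

variable {C : Type u} [Category.{v} C] {L : CLanguage C}

def LStr.glue (P : LStr L) {M : C} {β : Type*} (ι : β → (P.X ⟶ M))
    (fn : ∀ F : L.Fn, (M ⟶ L.arF1 F) → (M ⟶ L.arF2 F)) : LStr L where
  X := M
  rel R := {θ | ∃ b, ∃ η ∈ P.rel R, θ = η ≫ ι b}
  fn := fn

lemma LStr.isLHom_glue (P : LStr L) {M : C} {β : Type*} (ι : β → (P.X ⟶ M))
    (fn : ∀ F : L.Fn, (M ⟶ L.arF1 F) → (M ⟶ L.arF2 F)) (b : β)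
    (hfn : ∀ F γ, P.fn F (ι b ≫ γ) = ι b ≫ fn F γ)
    (hrel : ∀ R b' (η η' : L.arR R ⟶ P.X), η ≫ ι b = η' ≫ ι b' → η' ∈ P.rel R →
      η ∈ P.rel R) :
    IsLHom P (P.glue ι fn) (ι b) :=
  ⟨fun R η => ⟨fun hη => ⟨b, η, hη, rfl⟩, fun ⟨b', η', hη', e⟩ => hrel R b' η η' e hη'⟩, hfn⟩

theorem exists_isEmbeddingOver_copies
    (hcolim : ∀ (J : Type v) [Category.{v} J], Finite J → HasColimitsOfShape J C)
    (Y : LStr L) {W : C} {β : Type*} [Finite β] (t : β → (Y.X ⟶ W)) :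
    ∃ (P : LStr L) (πP : P.X ⟶ W) (u : β → (Y.X ⟶ P.X)),
      ∀ b, IsEmbeddingOver Y P (t b) πP (u b) := by
  let e := equivShrink.{v} β
  have : HasCoproduct fun _ : Shrink.{v} β => Y.X := (hcolim _ inferInstance).has_colimit _
  let ι := Sigma.ι fun _ : Shrink.{v} β => Y.X
  have hret : ∀ k, ι k ≫ Sigma.desc (fun _ => 𝟙 Y.X) = 𝟙 Y.X := fun k => Sigma.ι_desc _ k
  refine ⟨Y.glue ι fun F γ => Sigma.desc fun k => Y.fn F (ι k ≫ γ),
    Sigma.desc fun k => t (e.symm k), fun b => ι (e b), fun b => ⟨?_, ⟨_, hret _⟩, ?_⟩⟩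
  · refine Y.isLHom_glue ι _ _ (fun F γ => by simp [ι]) fun R k η η' h hη' => ?_
    rwa [eq_of_comp_eq_of_retraction (hret _) (hret _) h]
  · exact (Sigma.ι_desc _ _).trans (congrArg t (e.symm_apply_apply b))

end Glue

instance {A ι : Type*} [Finite A] [Finite ι] : Finite (Line A ι) :=
  Finite.of_injective Line.idxFun fun _ _ => Line.ext

namespace LineAmalgam

def shape (A : Type v) (ι : Type) : MultispanShape.{v, v} where
  L := Line A ι × A
  R := (ι → A) ⊕ Line A ι
  fst p := .inl (p.1 p.2)
  snd p := .inr p.1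

instance {A : Type v} {ι : Type} [Finite A] [Finite ι] :
    Finite (WalkingMultispan (shape A ι)) := by
  have : Fintype (shape A ι).L := Fintype.ofFinite (Line A ι × A)
  have : Fintype (shape A ι).R := Fintype.ofFinite ((ι → A) ⊕ Line A ι)
  infer_instance

variable {C : Type u} [Category.{v} C]

def index {X P : C} {A : Type v} (em : A → (X ⟶ P)) (ι : Type) :
    MultispanIndex (shape A ι) C where
  left _ := X
  right := Sum.elim (fun _ => X) (fun _ => P)
  fst _ := 𝟙 X
  snd p := em p.2

section Colimit

variable {X P : C} {A : Type v} (em : A → (X ⟶ P)) (ι : Type) [HasMulticoequalizer (index em ι)]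

noncomputable abbrev wordπ (w : ι → A) : X ⟶ multicoequalizer (index em ι) :=
  Multicoequalizer.π (index em ι) (.inl w)

noncomputable abbrev lineπ (l : Line A ι) : P ⟶ multicoequalizer (index em ι) :=
  Multicoequalizer.π (index em ι) (.inr l)

lemma em_comp_lineπ (l : Line A ι) (a : A) : em a ≫ lineπ em ι l = wordπ em ι (l a) :=
  (Multicoequalizer.condition (index em ι) (l, a)).symm.trans (Category.id_comp _)

noncomputable def desc {V : C} (tw : (ι → A) → (X ⟶ V)) (tl : Line A ι → (P ⟶ V))
    (h : ∀ l a, em a ≫ tl l = tw (l a)) : multicoequalizer (index em ι) ⟶ V :=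
  Multicoequalizer.desc (index em ι) V (fun | .inl w => tw w | .inr l => tl l)
    fun p => (Category.id_comp _).trans (h p.1 p.2).symm

lemma lineπ_desc {V : C} (tw : (ι → A) → (X ⟶ V)) (tl : Line A ι → (P ⟶ V))
    (h : ∀ l a, em a ≫ tl l = tw (l a)) (l : Line A ι) :
    lineπ em ι l ≫ desc em ι tw tl h = tl l :=
  Multicoequalizer.π_desc _ _ _ _ _

variable {em} {ρ : P ⟶ X}

noncomputable def coordProj (hρ : ∀ a, em a ≫ ρ = 𝟙 X) (d : ι) : multicoequalizer (index em ι) ⟶ P :=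
  desc em ι (fun w => em (w d)) (fun l => (l.idxFun d).elim (𝟙 P) fun a => ρ ≫ em a)
    fun l a => by
      cases hd : l.idxFun d with
      | none => simp [hd]
      | some b => simp [reassoc_of% hρ a, hd]

lemma lineπ_coordProj_of_none (hρ : ∀ a, em a ≫ ρ = 𝟙 X) {l : Line A ι} {d : ι} (hd : l.idxFun d = none) :
    lineπ em ι l ≫ coordProj ι hρ d = 𝟙 P := by
  simp [coordProj, lineπ_desc, hd]

lemma lineπ_coordProj_of_some (hρ : ∀ a, em a ≫ ρ = 𝟙 X) {l : Line A ι} {d : ι} {a : A} (hd : l.idxFun d = some a) :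
    lineπ em ι l ≫ coordProj ι hρ d = ρ ≫ em a := by
  simp [coordProj, lineπ_desc, hd]

lemma hasLeftInv_lineπ (hρ : ∀ a, em a ≫ ρ = 𝟙 X) (l : Line A ι) : HasLeftInv (lineπ em ι l) :=
  let ⟨_, hd⟩ := l.proper
  ⟨_, lineπ_coordProj_of_none ι hρ hd⟩

end Colimit

section Structure

variable {L : CLanguage C} {XS P : LStr L} {A : Type v} {em : A → (XS.X ⟶ P.X)}

lemma mem_rel_of_eq_comp_retraction (hem : ∀ a, IsLHom XS P (em a)) {ρ : P.X ⟶ XS.X}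
    (hρ : ∀ a, em a ≫ ρ = 𝟙 XS.X) {R : L.Rel} {η η' : L.arR R ⟶ P.X} {a b : A}
    (h₁ : η = η' ≫ ρ ≫ em a) (h₂ : η' = η ≫ ρ ≫ em b) (hη' : η' ∈ P.rel R) :
    η ∈ P.rel R := by
  have hζ : η ≫ ρ = η' ≫ ρ := by simp [h₁, hρ]
  rw [h₂, ← Category.assoc, hζ, ← (hem b).1] at hη'
  rw [h₁, ← Category.assoc]
  exact ((hem a).1 R _).1 hη'

variable (em) (ι : Type) [HasMulticoequalizer (index em ι)]

noncomputable def lStr (hem : ∀ a, IsLHom XS P (em a)) : LStr L :=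
  P.glue (lineπ em ι) fun F γ =>
    desc em ι (fun w => XS.fn F (wordπ em ι w ≫ γ)) (fun l => P.fn F (lineπ em ι l ≫ γ))
      fun l a => by rw [← (hem a).2, ← Category.assoc, em_comp_lineπ]

variable {em}

lemma mem_rel_of_comp_lineπ_eq (hem : ∀ a, IsLHom XS P (em a)) {ρ : P.X ⟶ XS.X}
    (hρ : ∀ a, em a ≫ ρ = 𝟙 XS.X) {R : L.Rel} {l l' : Line A ι} {η η' : L.arR R ⟶ P.X}
    (h : η ≫ lineπ em ι l = η' ≫ lineπ em ι l') (hη' : η' ∈ P.rel R) : η ∈ P.rel R := by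
  by_cases hcommon : ∃ d, l.idxFun d = none ∧ l'.idxFun d = none
  · obtain ⟨d, hd, hd'⟩ := hcommon
    rwa [eq_of_comp_eq_of_retraction (lineπ_coordProj_of_none ι hρ hd)
      (lineπ_coordProj_of_none ι hρ hd') h]
  · push Not at hcommon
    obtain ⟨d, hd⟩ := l.proper
    obtain ⟨d', hd'⟩ := l'.proper
    obtain ⟨a, ha⟩ := Option.ne_none_iff_exists'.mp (hcommon d hd)
    obtain ⟨b, hb⟩ := Option.ne_none_iff_exists'.mp fun h => hcommon d' h hd'
    refine mem_rel_of_eq_comp_retraction hem hρ (a := a) (b := b) ?_ ?_ hη'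
    · simpa [lineπ_coordProj_of_none ι hρ hd, lineπ_coordProj_of_some ι hρ ha]
        using congrArg (· ≫ coordProj ι hρ d) h
    · simpa [lineπ_coordProj_of_none ι hρ hd', lineπ_coordProj_of_some ι hρ hb]
        using (congrArg (· ≫ coordProj ι hρ d') h).symm

lemma isLHom_lineπ (hem : ∀ a, IsLHom XS P (em a)) {ρ : P.X ⟶ XS.X}
    (hρ : ∀ a, em a ≫ ρ = 𝟙 XS.X) (l : Line A ι) :
    IsLHom P (lStr em ι hem) (lineπ em ι l) :=
  P.isLHom_glue _ _ l
    (fun F γ => (lineπ_desc em ι _ (fun l => P.fn F (lineπ em ι l ≫ γ)) _ l).symm)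
    fun _ _ _ _ h hη' => mem_rel_of_comp_lineπ_eq ι hem hρ h hη'

end Structure
end LineAmalgam

section Partite

variable {C : Type u} [Category.{v} C] {L : CLanguage C}

open LineAmalgam in
theorem exists_partite_ramsey (hCfin : ∀ X Y : C, Finite (X ⟶ Y))
    (hcolim : ∀ (J : Type v) [Category.{v} J], Finite J → HasColimitsOfShape J C)
    (XS P : LStr L) {W : C} (πP : P.X ⟶ W) {τ : XS.X ⟶ W} (hτ : HasLeftInv τ)
    (κ : Type*) [Finite κ] :
    ∃ (Q : LStr L) (πQ : Q.X ⟶ W), ∀ χ : (XS.X ⟶ Q.X) → κ,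
      ∃ u, IsEmbeddingOver P Q πP πQ u ∧
        ∃ c, ∀ h, IsLHom XS P h → h ≫ πP = τ → χ (h ≫ u) = c := by
  obtain ⟨ϑ, hϑ⟩ := hτ
  let A := {h : XS.X ⟶ P.X // IsLHom XS P h ∧ h ≫ πP = τ}
  obtain ⟨ι, _, hHJ⟩ := Line.exists_mono_in_high_dimension A κ
  let em : A → (XS.X ⟶ P.X) := Subtype.val
  have hem : ∀ a, IsLHom XS P (em a) := fun a => a.2.1
  have hρ : ∀ a, em a ≫ πP ≫ ϑ = 𝟙 XS.X := fun a => by rw [← Category.assoc, a.2.2, hϑ]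
  have : HasMulticoequalizer (index em ι) := (hcolim _ inferInstance).has_colimit _
  refine ⟨lStr em ι hem, desc em ι (fun _ => τ) (fun _ => πP) fun _ a => a.2.2, fun χ => ?_⟩
  obtain ⟨l, c, hl⟩ := hHJ fun w => χ (wordπ em ι w)
  exact ⟨lineπ em ι l, ⟨isLHom_lineπ ι hem hρ l, hasLeftInv_lineπ ι hρ l, lineπ_desc ..⟩, c,
    fun h hL hτ => (congrArg χ (em_comp_lineπ em ι l ⟨h, hL, hτ⟩)).trans (hl _)⟩

theorem exists_partite_ramsey_finset (hCfin : ∀ X Y : C, Finite (X ⟶ Y))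
    (hcolim : ∀ (J : Type v) [Category.{v} J], Finite J → HasColimitsOfShape J C)
    (XS P : LStr L) {W : C} (πP : P.X ⟶ W) (κ : Type*) [Finite κ]
    (s : Finset (XS.X ⟶ W)) (hs : ∀ τ ∈ s, HasLeftInv τ) :
    ∃ (Q : LStr L) (πQ : Q.X ⟶ W), ∀ χ : (XS.X ⟶ Q.X) → κ,
      ∃ u, IsEmbeddingOver P Q πP πQ u ∧
        ∀ τ ∈ s, ∃ c, ∀ h, IsLHom XS P h → h ≫ πP = τ → χ (h ≫ u) = c := by
  classical
  induction s using Finset.induction_on with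
  | empty => exact ⟨P, πP, fun _ => ⟨_, IsEmbeddingOver.id P πP, by simp⟩⟩
  | insert τ s _ ih =>
    obtain ⟨Q₁, π₁, hQ₁⟩ := ih fun τ' hτ' => hs τ' (Finset.mem_insert_of_mem hτ')
    obtain ⟨Q, πQ, hQ⟩ :=
      exists_partite_ramsey hCfin hcolim XS Q₁ π₁ (hs τ (Finset.mem_insert_self τ s)) κ
    refine ⟨Q, πQ, fun χ => ?_⟩
    obtain ⟨u₂, hu₂, c, hc⟩ := hQ χ
    obtain ⟨u₁, hu₁, hmono⟩ := hQ₁ fun t => χ (t ≫ u₂)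
    refine ⟨u₁ ≫ u₂, hu₁.comp hu₂, fun τ' hτ' => ?_⟩
    rcases Finset.mem_insert.mp hτ' with rfl | hτ's
    · refine ⟨c, fun h hL hπ => ?_⟩
      rw [← Category.assoc]
      exact hc _ (hL.comp hu₁.1) (by rw [Category.assoc, hu₁.2.2, hπ])
    · simpa only [Category.assoc] using hmono τ' hτ's

end Partite

/-- **Partite Construction**: let `G : 𝒟 ⥤ 𝒞` be a functor such that (1) `𝒞` and `𝒟`
have finite hom-sets, (2) `G(f)` has a left inverse in `𝒞` for every morphism `f` of
`𝒟`, (3) `𝒞` has colimits over all diagrams whose index category has a finite set of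
objects, and (4) `𝒟` has the Ramsey property. Then for any `𝒞`-language `ℒ`, any
`r > 0`, any monic `𝒟`-block `𝚇` and any `𝒟`-block `𝚈` there is a `𝒟`-block `𝚉` with
`𝚉 → (𝚈)^𝚇_r` in `Bl^m_𝒟`. -/
theorem partite_construction
    {C : Type u} [Category.{v} C] {D : Type u'} [Category.{v'} D] (G : D ⥤ C)
    (hCfin : ∀ X Y : C, Finite (X ⟶ Y))
    (hDfin : ∀ K L : D, Finite (K ⟶ L))
    (hG : ∀ {K L : D} (f : K ⟶ L), HasLeftInv (G.map f))
    (hcolim : ∀ (J : Type v) [Category.{v} J], Finite J → Limits.HasColimitsOfShape J C)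
    (hRamseyD : ∀ (A B : D) (r : ℕ), 0 < r → ∃ Z : D,
      ∀ χ : (A ⟶ Z) → Fin r, ∃ g : B ⟶ Z, ∃ c : Fin r, ∀ f : A ⟶ B, χ (f ≫ g) = c)
    (L : CLanguage C) (r : ℕ) (hr : 0 < r)
    (X Y : DBlock L G) (hX : HasLeftInv X.π) :
    ∃ Z : DBlock L G,
      ∀ χ : (X.S.X ⟶ Z.S.X) → Fin r,
        ∃ g : Y.S.X ⟶ Z.S.X, DBlockHom Y Z g ∧
          ∃ c : Fin r, ∀ f : X.S.X ⟶ Y.S.X, DBlockHom X Y f → χ (f ≫ g) = c := by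
  classical
  obtain ⟨K₀, hK₀⟩ := hRamseyD X.K Y.K r hr
  have := Fintype.ofFinite (X.K ⟶ K₀)
  obtain ⟨P, πP, u, hu⟩ :=
    exists_isEmbeddingOver_copies hcolim Y.S fun j : Y.K ⟶ K₀ => Y.π ≫ G.map j
  obtain ⟨Q, πQ, hQ⟩ := exists_partite_ramsey_finset hCfin hcolim X.S P πP (Fin r)
    (Finset.univ.image fun i => X.π ≫ G.map i) (by simpa using fun i => hX.comp (hG i))
  refine ⟨⟨Q, K₀, πQ⟩, fun χ => ?_⟩
  obtain ⟨v, hv, hmono⟩ := hQ χ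
  choose col hcol using fun i => hmono _ (Finset.mem_image_of_mem _ (Finset.mem_univ i))
  obtain ⟨j, c, hj⟩ := hK₀ col
  have hg := (hu j).comp hv
  refine ⟨u j ≫ v, ⟨hg.1, hg.2.1, j, hg.2.2⟩, c, fun f ⟨hfL, _, i, hfπ⟩ => ?_⟩
  rw [← Category.assoc, hcol (i ≫ j) _ (hfL.comp (hu j).1)
    (by rw [Category.assoc, (hu j).2.2, reassoc_of% hfπ, G.map_comp]), hj]
end

section
/- Let G : (Fin, ≤) → Fin be the forgetful functor defined by G(K, ≤) = K and G(f) = f, where (Fin, ≤) is the category of finite linear orders with increasing injections and Fin is the category of finite sets. For any Fin-language ℒ, the category (ℒ, (Fin, ≤)) has the Ramsey property: for all objects 𝖪, 𝖬 of (ℒ, (Fin, ≤)) and all integers r > 0, there exists an object 𝖹 of (ℒ, (Fin, ≤)) such that 𝖹 → (𝖬)^𝖪_r. -/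
/-!
Fix `N` with `Fin N → (M)^K_r` for plain finite linear orders (finite Ramsey theorem). Consider
structures `V` with a monotone layer map `π : V → Fin N`; a copy `α` of `K` in `V` has the pattern
`π ∘ α`. Start with the disjoint union of copies of `M`, one over each increasing `σ : M → Fin N`.

For one increasing pattern `τ`, let `ι` be a Hales–Jewett dimension for the alphabet of copies of
`K` over `τ`, and build a structure on the power `ι → V`: each combinatorial line `ℓ` embeds `V`,
sending every copy `a` over `τ` to the copy `x ↦ (n ↦ ℓ a n x)` given by the word `ℓ a`, so a
monochromatic line is an embedding of `V` on which the colour of the copies over `τ` is constant.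
The structures transported along different lines agree: two copies over `τ` meet only in the same
positions, and on the set where they agree the dual functions of `K` only depend on the argument
there.

Handling the patterns one after the other, the colour of a copy of `K` only depends on its
pattern; the choice of `N` then provides a copy of `M` all of whose copies of `K` have one colour.
-/

/-- A `Fin`-language: a set of relation symbols with arities finite sets, and a set
of function symbols with arities pairs of finite sets. -/
structure FinLanguage where
  Rel : Type
  Fn : Type
  arR : Rel → Type
  arR_fin : ∀ R, Finite (arR R)
  arF1 : Fn → Type
  arF1_fin : ∀ F, Finite (arF1 F)
  arF2 : Fn → Type
  arF2_fin : ∀ F, Finite (arF2 F)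

/-- An object of the category `(ℒ, (Fin, ≤))`: a finite linearly ordered `ℒ`-structure,
with the standard interpretation of relation symbols (`R^𝖷 ⊆ X^r`) and the dual
interpretation of function symbols (`F^𝖷 : r^X → s^X`). -/
structure OrdStr (L : FinLanguage) where
  X : Type
  fin : Finite X
  ord : LinearOrder X
  rel : ∀ R : L.Rel, Set (L.arR R → X)
  fn : ∀ F : L.Fn, (X → L.arF1 F) → (X → L.arF2 F)

/-- A morphism of `(ℒ, (Fin, ≤))`: an increasing injection (strictly monotone map)
that is an `ℒ`-homomorphism. -/
def IsOrdHom {L : FinLanguage} (A B : OrdStr L) (f : A.X → B.X) : Prop :=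
  (∀ a b : A.X, A.ord.lt a b → B.ord.lt (f a) (f b)) ∧
  (∀ (R : L.Rel) (η : L.arR R → A.X), η ∈ A.rel R ↔ (f ∘ η) ∈ B.rel R) ∧
  (∀ (F : L.Fn) (γ : B.X → L.arF1 F), A.fn F (γ ∘ f) = (B.fn F γ) ∘ f)

attribute [instance] OrdStr.fin OrdStr.ord

open Function Set Combinatorics

/-- The arrow relation `Z → (B)^A_r` of the category of orders with increasing injections. -/
def RamseyArrow (Z B A : Type*) [Preorder Z] [Preorder B] [Preorder A] (r : ℕ) : Prop :=
  ∀ Ξ : (A → Z) → Fin r, ∃ σ : B → Z, StrictMono σ ∧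
    ∃ c, ∀ f : A → B, StrictMono f → Ξ (σ ∘ f) = c

theorem Fin.exists_succ_comp_of_ne_zero {α : Type*} [Preorder α] {n : ℕ} {g : α → Fin (n + 1)}
    (hg : StrictMono g) (h0 : ∀ a, g a ≠ 0) :
    ∃ g' : α → Fin n, StrictMono g' ∧ g = Fin.succ ∘ g' :=
  ⟨fun a => (g a).pred (h0 a), fun a b hab => by simpa [Fin.pred_lt_pred_iff] using hg hab,
    funext fun a => (Fin.succ_pred _ _).symm⟩

theorem exists_ramsey_color_eq_head {k r : ℕ}
    (hk : ∀ n, ∃ N, RamseyArrow (Fin N) (Fin n) (Fin k) r) (n : ℕ) :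
    ∃ N, ∀ Ξ : (Fin (k + 1) → Fin N) → Fin r, ∃ g : Fin n → Fin N, StrictMono g ∧
      ∃ κ : Fin n → Fin r, ∀ f : Fin (k + 1) → Fin n, StrictMono f → Ξ (g ∘ f) = κ (f 0) := by
  induction n with
  | zero => exact ⟨0, fun _ => ⟨id, strictMono_id, Fin.elim0, fun f _ => (f 0).elim0⟩⟩
  | succ n ih =>
    obtain ⟨N₂, hN₂⟩ := ih
    obtain ⟨N₁, hN₁⟩ := hk N₂
    refine ⟨N₁ + 1, fun Ξ => ?_⟩
    obtain ⟨σ, hσ, c, hc⟩ := hN₁ fun u => Ξ (Fin.cons 0 (Fin.succ ∘ u))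
    obtain ⟨g, hg, κ, hκ⟩ := hN₂ fun u => Ξ (Fin.succ ∘ σ ∘ u)
    refine ⟨Fin.cons 0 (Fin.succ ∘ σ ∘ g),
      Fin.strictMono_cons.2 ⟨fun _ => Fin.succ_pos _, Fin.strictMono_succ.comp (hσ.comp hg)⟩,
      Fin.cons c κ, fun f hf => ?_⟩
    by_cases hf0 : f 0 = 0
    · obtain ⟨f', hf', hf'_eq⟩ := Fin.exists_succ_comp_of_ne_zero (g := Fin.tail f)
        (hf.comp Fin.strictMono_succ) fun i => (hf0 ▸ hf (Fin.succ_pos i)).ne'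
      rw [← Fin.cons_self_tail f, hf0, hf'_eq, Fin.comp_cons, Fin.cons_zero]
      simpa [comp_def] using hc (g ∘ f') (hg.comp hf')
    · obtain ⟨f', hf', rfl⟩ := Fin.exists_succ_comp_of_ne_zero hf fun i hi =>
        hf0 (le_antisymm (hi ▸ hf.monotone (Fin.zero_le i)) (Fin.zero_le _))
      simpa [comp_def] using hκ f' hf'

theorem exists_ramseyArrow_fin (k : ℕ) {r : ℕ} (hr : 0 < r) (n : ℕ) :
    ∃ N, RamseyArrow (Fin N) (Fin n) (Fin k) r := by
  induction k generalizing n with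
  | zero => exact ⟨n, fun Ξ => ⟨id, strictMono_id, Ξ Fin.elim0, fun f _ => by
      rw [Subsingleton.elim (id ∘ f) Fin.elim0]⟩⟩
  | succ k ih =>
    obtain ⟨N, hN⟩ := exists_ramsey_color_eq_head ih (r * n)
    refine ⟨N, fun Ξ => ?_⟩
    obtain ⟨g, hg, κ, hκ⟩ := hN Ξ
    -- Among `r * n` heads, `n` have the same colour.
    obtain ⟨c, -, hc⟩ := Finset.exists_le_card_fiber_of_mul_le_card_of_maps_to (f := κ)
      (s := Finset.univ) (n := n) (fun a _ => Finset.mem_univ _) ⟨⟨0, hr⟩, Finset.mem_univ _⟩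
      (by simp)
    obtain ⟨t, ht, htcard⟩ := Finset.exists_subset_card_eq hc
    let e := t.orderEmbOfFin htcard
    refine ⟨g ∘ e, hg.comp e.strictMono, c, fun f hf => ?_⟩
    rw [comp_assoc, hκ _ (e.strictMono.comp hf)]
    exact (Finset.mem_filter.1 (ht (t.orderEmbOfFin_mem htcard (f 0)))).2

theorem RamseyArrow.congr_orderIso {Z B B' A A' : Type*} [Preorder Z] [Preorder B] [Preorder B']
    [Preorder A] [Preorder A'] {r : ℕ} (h : RamseyArrow Z B A r) (eB : B ≃o B') (eA : A ≃o A') :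
    RamseyArrow Z B' A' r := by
  intro Ξ
  obtain ⟨σ, hσ, c, hc⟩ := h fun u => Ξ (u ∘ eA.symm)
  refine ⟨σ ∘ eB.symm, hσ.comp eB.symm.strictMono, c, fun f hf => ?_⟩
  simpa [comp_def] using
    hc (eB.symm ∘ f ∘ eA) (eB.symm.strictMono.comp (hf.comp eA.strictMono))

theorem exists_ramseyArrow (B A : Type*) [LinearOrder B] [LinearOrder A] [Finite B] [Finite A]
    {r : ℕ} (hr : 0 < r) : ∃ N, RamseyArrow (Fin N) B A r := by
  have := Fintype.ofFinite A
  have := Fintype.ofFinite B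
  obtain ⟨N, hN⟩ := exists_ramseyArrow_fin (Fintype.card A) hr (Fintype.card B)
  exact ⟨N, hN.congr_orderIso (Fintype.orderIsoFinOfCardEq B rfl)
    (Fintype.orderIsoFinOfCardEq A rfl)⟩

section Morphisms

variable {L : FinLanguage} {A B C : OrdStr L} {f : A.X → B.X} {g : B.X → C.X}

theorem IsOrdHom.strictMono (hf : IsOrdHom A B f) : StrictMono f := hf.1

theorem IsOrdHom.id (A : OrdStr L) : IsOrdHom A A id :=
  ⟨fun _ _ h => h, fun _ _ => Iff.rfl, fun _ _ => rfl⟩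

theorem IsOrdHom.comp (hg : IsOrdHom B C g) (hf : IsOrdHom A B f) : IsOrdHom A C (g ∘ f) := by
  refine ⟨hg.strictMono.comp hf.strictMono, fun R η => (hf.2.1 R η).trans (hg.2.1 R (f ∘ η)),
    fun F γ => ?_⟩
  rw [← comp_assoc, hf.2.2, hg.2.2, comp_assoc]

end Morphisms

instance Combinatorics.Line.instFinite {α ι : Type*} [Finite α] [Finite ι] : Finite (Line α ι) :=
  Finite.of_injective Line.idxFun fun l m h => by cases l; cases m; cases h; rfl

section FnLocal

variable {L : FinLanguage} (K : OrdStr L)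

def IsFnLocal (S : Set K.X) : Prop :=
  ∀ (F : L.Fn) (δ δ' : K.X → L.arF1 F), EqOn δ δ' S → EqOn (K.fn F δ) (K.fn F δ') S

variable {K}

theorem isFnLocal_univ : IsFnLocal K univ := by
  intro F δ δ' h
  rw [(eqOn_univ δ δ').1 h]
  exact eqOn_refl _ _

theorem IsFnLocal.inter {S T : Set K.X} (hS : IsFnLocal K S) (hT : IsFnLocal K T) :
    IsFnLocal K (S ∩ T) := by
  classical
  intro F δ δ' h x hx
  have hδS : EqOn δ (S.piecewise δ δ') S := fun t ht => (piecewise_eq_of_mem _ _ _ ht).symm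
  have hδT : EqOn (S.piecewise δ δ') δ' T := fun t ht => by
    by_cases htS : t ∈ S
    · rw [piecewise_eq_of_mem _ _ _ htS]; exact h ⟨htS, ht⟩
    · exact piecewise_eq_of_notMem _ _ _ htS
  exact (hS F _ _ hδS hx.1).trans (hT F _ _ hδT hx.2)

theorem IsFnLocal.iInter {ι : Type*} [Finite ι] {S : ι → Set K.X} (h : ∀ n, IsFnLocal K (S n)) :
    IsFnLocal K (⋂ n, S n) := by
  classical
  have := Fintype.ofFinite ι
  have hfin (s : Finset ι) : IsFnLocal K (⋂ n ∈ s, S n) := by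
    induction s using Finset.induction_on with
    | empty => simpa using isFnLocal_univ
    | insert n s _ ih => simpa [Finset.set_biInter_insert] using (h n).inter ih
  simpa using hfin Finset.univ

end FnLocal

section Stage

variable {L : FinLanguage} {K V : OrdStr L} {N : ℕ} {π : V.X → Fin N} {τ : K.X → Fin N}
  {ι : Type}

variable (K π τ) in
def CopyOver : Type := {α : K.X → V.X // IsOrdHom K V α ∧ π ∘ α = τ}

namespace CopyOver

instance : CoeFun (CopyOver K π τ) fun _ => K.X → V.X := ⟨Subtype.val⟩

instance : Finite (CopyOver K π τ) := Subtype.finite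

theorem isOrdHom (a : CopyOver K π τ) : IsOrdHom K V a := a.2.1

theorem layer_apply (a : CopyOver K π τ) (x : K.X) : π (a x) = τ x := congrFun a.2.2 x

variable [Nonempty K.X]

theorem invFun_layer_apply (hτ : StrictMono τ) (a : CopyOver K π τ) (x : K.X) :
    invFun τ (π (a x)) = x := by
  rw [a.layer_apply]
  exact leftInverse_invFun hτ.injective x

theorem eq_of_apply_eq (hτ : StrictMono τ) (a b : CopyOver K π τ) {x y : K.X} (h : a x = b y) :
    x = y := by
  rw [← a.invFun_layer_apply hτ x, h, b.invFun_layer_apply hτ y]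

end CopyOver

variable (K π τ) in
def IsCovered (v : V.X) : Prop := ∃ (a : CopyOver K π τ) (x : K.X), a x = v

theorem IsCovered.apply_invFun_layer [Nonempty K.X] {v : V.X} (hv : IsCovered K π τ v) :
    τ (invFun τ (π v)) = π v := by
  obtain ⟨a, x, rfl⟩ := hv
  exact invFun_eq ⟨x, (a.layer_apply x).symm⟩

theorem isFnLocal_setOf_apply_eq [Nonempty K.X] (hτ : StrictMono τ) (a b : CopyOver K π τ) :
    IsFnLocal K {t | a t = b t} := by
  classical
  intro F δ δ' hδ x hx
  let γ : V.X → L.arF1 F := (range a).piecewise (δ ∘ invFun τ ∘ π) (δ' ∘ invFun τ ∘ π)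
  have hγa : γ ∘ a = δ := funext fun t => by
    simp [γ, a.invFun_layer_apply hτ]
  have hγb : γ ∘ b = δ' := funext fun t => by
    by_cases ht : b t ∈ range a
    · obtain ⟨t', ht'⟩ := ht
      obtain rfl := a.eq_of_apply_eq hτ b ht'
      rw [comp_apply, ← ht', ← comp_apply (f := γ), hγa]
      exact hδ ht'
    · simp [γ, piecewise_eq_of_notMem _ _ _ ht, b.invFun_layer_apply hτ]
  calc K.fn F δ x = V.fn F γ (a x) := by rw [← hγa, a.isOrdHom.2.2]; rfl
    _ = V.fn F γ (b x) := by rw [show a x = b x from hx]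
    _ = K.fn F δ' x := by rw [← hγb, b.isOrdHom.2.2]; rfl

variable [Nonempty K.X]

/-- For `v = a x` on a copy `a` over `τ`, this is the point `x` of the copy `ℓ a` of `K` in the
power (`embed_comp_copy`). -/
noncomputable def linePoint (ℓ : Line (CopyOver K π τ) ι) (v : V.X) : ι → V.X :=
  fun n => (ℓ.idxFun n).elim v fun a => a (invFun τ (π v))

theorem linePoint_of_eq_none {ℓ : Line (CopyOver K π τ) ι} {n : ι} (hn : ℓ.idxFun n = none)
    (v : V.X) : linePoint ℓ v n = v := by
  simp [linePoint, hn]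

theorem linePoint_of_eq_some {ℓ : Line (CopyOver K π τ) ι} {n : ι} {a : CopyOver K π τ}
    (hn : ℓ.idxFun n = some a) (v : V.X) : linePoint ℓ v n = a (invFun τ (π v)) := by
  simp [linePoint, hn]

theorem layer_linePoint {v : V.X} (hv : IsCovered K π τ v) (ℓ : Line (CopyOver K π τ) ι)
    (n : ι) : π (linePoint ℓ v n) = π v := by
  rcases hn : ℓ.idxFun n with _ | a
  · rw [linePoint_of_eq_none hn]
  · rw [linePoint_of_eq_some hn, a.layer_apply, hv.apply_invFun_layer]

theorem toLex_linePoint_lt [LinearOrder ι] [Finite ι] {v v' : V.X} (hvv' : π v = π v')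
    (h : v < v') (ℓ : Line (CopyOver K π τ) ι) :
    toLex (linePoint ℓ v) < toLex (linePoint ℓ v') := by
  obtain ⟨i, hi, hmin⟩ := WellFounded.has_min wellFounded_lt {n | ℓ.idxFun n = none} ℓ.proper
  refine ⟨i, fun j hj => ?_, ?_⟩
  · rcases hnj : ℓ.idxFun j with _ | a
    · exact absurd hj (hmin j hnj)
    · simp [linePoint_of_eq_some hnj, hvv']
  · simpa [linePoint_of_eq_none hi] using h

variable (K π τ ι) in
/-- The power `ι → V` receives the covered points; the other points are kept apart, one copy of
them per line (sharing them would break `mem_rel_of_embed_comp_eq`). -/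
abbrev StageCarrier : Type _ := (ι → V.X) ⊕ (Line (CopyOver K π τ) ι × V.X)

open scoped Classical in
noncomputable def embed (ℓ : Line (CopyOver K π τ) ι) (v : V.X) : StageCarrier K π τ ι :=
  if IsCovered K π τ v then .inl (linePoint ℓ v) else .inr (ℓ, v)

def wordCopy (w : ι → CopyOver K π τ) (x : K.X) : StageCarrier K π τ ι := .inl fun n => w n x

theorem embed_comp_copy (hτ : StrictMono τ) (ℓ : Line (CopyOver K π τ) ι) (a : CopyOver K π τ) :
    embed ℓ ∘ a = wordCopy (ℓ a) := by
  funext x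
  have hx : IsCovered K π τ (a x) := ⟨a, x, rfl⟩
  simp only [comp_apply, embed, if_pos hx, wordCopy, Sum.inl.injEq]
  funext n
  rcases hn : ℓ.idxFun n with _ | b
  · simp [linePoint_of_eq_none hn, hn]
  · simp [linePoint_of_eq_some hn, hn, a.invFun_layer_apply hτ]

theorem embed_eq_embed {ℓ₁ ℓ₂ : Line (CopyOver K π τ) ι} {v₁ v₂ : V.X}
    (h : embed ℓ₁ v₁ = embed ℓ₂ v₂) :
    ℓ₁ = ℓ₂ ∧ v₁ = v₂ ∨
      IsCovered K π τ v₁ ∧ IsCovered K π τ v₂ ∧ linePoint ℓ₁ v₁ = linePoint ℓ₂ v₂ := by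
  unfold embed at h
  split_ifs at h with h₁ h₂ h₂ <;> simp_all

theorem linePoint_eq_of_embed_eq {ℓ₁ ℓ₂ : Line (CopyOver K π τ) ι} {v₁ v₂ : V.X}
    (h : embed ℓ₁ v₁ = embed ℓ₂ v₂) : linePoint ℓ₁ v₁ = linePoint ℓ₂ v₂ := by
  rcases embed_eq_embed h with ⟨rfl, rfl⟩ | ⟨-, -, h⟩ <;> trivial

def stageLayer (i₀ : ι) : StageCarrier K π τ ι → Fin N
  | .inl h => π (h i₀)
  | .inr p => π p.2

theorem stageLayer_embed (i₀ : ι) (ℓ : Line (CopyOver K π τ) ι) (v : V.X) :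
    stageLayer i₀ (embed ℓ v) = π v := by
  unfold embed
  split_ifs with hv
  · exact layer_linePoint hv ℓ i₀
  · rfl

theorem layer_eq_of_embed_eq {ℓ₁ ℓ₂ : Line (CopyOver K π τ) ι} {v₁ v₂ : V.X}
    (h : embed ℓ₁ v₁ = embed ℓ₂ v₂) : π v₁ = π v₂ := by
  obtain ⟨i₀, -⟩ := ℓ₁.proper
  simpa [stageLayer_embed] using congrArg (stageLayer i₀) h

theorem mem_rel_of_embed_comp_eq {R : L.Rel}
    {ℓ₁ ℓ₂ : Line (CopyOver K π τ) ι} {η₁ η₂ : L.arR R → V.X}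
    (h : embed ℓ₁ ∘ η₁ = embed ℓ₂ ∘ η₂) (hη₂ : η₂ ∈ V.rel R) : η₁ ∈ V.rel R := by
  have hcoord {ℓ ℓ' : Line (CopyOver K π τ) ι} {η η' : L.arR R → V.X}
      (h : embed ℓ ∘ η = embed ℓ' ∘ η') {n : ι} (hn : ℓ.idxFun n = none) (u : L.arR R) :
      η u = linePoint ℓ' (η' u) n := by
    simpa [linePoint_of_eq_none hn] using congrFun (linePoint_eq_of_embed_eq (congrFun h u)) n
  obtain ⟨n, hn⟩ := ℓ₁.proper
  obtain ⟨m, hm⟩ := ℓ₂.proper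
  rcases hn₂ : ℓ₂.idxFun n with _ | b
  · obtain rfl : η₁ = η₂ := funext fun u => by rw [hcoord h hn, linePoint_of_eq_none hn₂]
    exact hη₂
  rcases hm₁ : ℓ₁.idxFun m with _ | a
  · obtain rfl : η₂ = η₁ := funext fun u => by rw [hcoord h.symm hm, linePoint_of_eq_none hm₁]
    exact hη₂
  -- Reading off the coordinates `n` and `m` exhibits both tuples as images of one tuple of `K`.
  let ζ u := invFun τ (π (η₂ u))
  have hη₁ : η₁ = b ∘ ζ := funext fun u => by rw [hcoord h hn, linePoint_of_eq_some hn₂]; rfl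
  have hη₂' : η₂ = a ∘ ζ := funext fun u => by
    rw [hcoord h.symm hm, linePoint_of_eq_some hm₁, layer_eq_of_embed_eq (congrFun h u)]; rfl
  rw [hη₂', ← a.isOrdHom.2.1] at hη₂
  rwa [hη₁, ← b.isOrdHom.2.1]

end Stage

section StageStructure

variable {L : FinLanguage} {K V : OrdStr L} {N : ℕ} {π : V.X → Fin N} {τ : K.X → Fin N}
  {ι : Type} [Nonempty K.X] [Finite ι]

theorem fn_comp_wordCopy_eq (hτ : StrictMono τ) {w w' : ι → CopyOver K π τ} {x : K.X}
    (hx : wordCopy w x = wordCopy w' x) (F : L.Fn) (γ : StageCarrier K π τ ι → L.arF1 F) :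
    K.fn F (γ ∘ wordCopy w) x = K.fn F (γ ∘ wordCopy w') x := by
  refine IsFnLocal.iInter (fun n => isFnLocal_setOf_apply_eq hτ (w n) (w' n)) F _ _
    (fun t ht => ?_) (mem_iInter.2 fun n => congrFun (Sum.inl.inj hx) n)
  exact congrArg (γ ∘ Sum.inl) (funext (mem_iInter.1 ht))

theorem fn_comp_embed_eq (hτ : StrictMono τ) {ℓ₁ ℓ₂ : Line (CopyOver K π τ) ι} {v₁ v₂ : V.X}
    (h : embed ℓ₁ v₁ = embed ℓ₂ v₂) (F : L.Fn) (γ : StageCarrier K π τ ι → L.arF1 F) :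
    V.fn F (γ ∘ embed ℓ₁) v₁ = V.fn F (γ ∘ embed ℓ₂) v₂ := by
  rcases embed_eq_embed h with ⟨rfl, rfl⟩ | ⟨⟨a₁, x, rfl⟩, ⟨a₂, x', rfl⟩, -⟩
  · rfl
  obtain rfl : x = x' := hτ.injective <| by
    rw [← a₁.layer_apply, ← a₂.layer_apply, layer_eq_of_embed_eq h]
  have hfn (ℓ : Line (CopyOver K π τ) ι) (a : CopyOver K π τ) :
      V.fn F (γ ∘ embed ℓ) (a x) = K.fn F (γ ∘ wordCopy (ℓ a)) x := by
    rw [← embed_comp_copy hτ, ← comp_assoc, a.isOrdHom.2.2]; rfl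
  rw [hfn, hfn]
  refine fn_comp_wordCopy_eq hτ ?_ F γ
  rw [← embed_comp_copy hτ, ← embed_comp_copy hτ]
  exact h

/-- The coordinate `i₀` is arbitrary: on the image of every `embed ℓ`, all coordinates of a
power point lie in one layer. -/
noncomputable def stageKey (i₀ : ι) :
    StageCarrier K π τ ι →
      Fin N ×ₗ Lex (ι → V.X) ×ₗ WithBot (Fin (Nat.card (Line (CopyOver K π τ) ι)))
  | .inl h => toLex (π (h i₀), toLex (toLex h, ⊥))
  | .inr (ℓ, v) => toLex (π v, toLex (toLex (linePoint ℓ v), Finite.equivFin _ ℓ))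

theorem stageKey_injective (i₀ : ι) : Injective (stageKey (K := K) (π := π) (τ := τ) i₀) := by
  rintro (h | ⟨ℓ, v⟩) (h' | ⟨ℓ', v'⟩) hk <;>
    simp only [stageKey, EmbeddingLike.apply_eq_iff_eq, Prod.mk.injEq, WithBot.coe_inj,
      WithBot.bot_ne_coe, WithBot.coe_ne_bot, and_true, and_false] at hk
  · rw [hk.2]
  obtain ⟨-, hv, rfl⟩ := hk
  obtain ⟨n, hn⟩ := ℓ.proper
  simpa [linePoint_of_eq_none hn] using congrFun hv n

variable [LinearOrder ι]

variable (K π τ) in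
open scoped Classical in
/-- The structure transported along the embeddings `embed ℓ` does not depend on the line, by
`mem_rel_of_embed_comp_eq` and `fn_comp_embed_eq`. -/
noncomputable def stage (hfn : ∀ F : L.Fn, Nonempty (L.arF1 F) → Nonempty (L.arF2 F)) (i₀ : ι) :
    OrdStr L where
  X := StageCarrier K π τ ι
  fin := inferInstance
  ord := LinearOrder.lift' (stageKey i₀) (stageKey_injective i₀)
  rel R := {θ | ∃ ℓ η, η ∈ V.rel R ∧ θ = embed ℓ ∘ η}
  fn F γ z :=
    if h : ∃ p : Line (CopyOver K π τ) ι × V.X, embed p.1 p.2 = z then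
      V.fn F (γ ∘ embed h.choose.1) h.choose.2
    else (hfn F ⟨γ z⟩).some

variable {hfn : ∀ F : L.Fn, Nonempty (L.arF1 F) → Nonempty (L.arF2 F)}

theorem stageLayer_monotone (i₀ : ι) :
    Monotone (α := (stage K π τ hfn i₀).X) (stageLayer i₀) := fun z z' h => by
  have := Prod.Lex.monotone_fst _ _ h
  cases z <;> cases z' <;> exact this

theorem embed_strictMono (hπ : Monotone π) (i₀ : ι) (ℓ : Line (CopyOver K π τ) ι) :
    StrictMono (β := (stage K π τ hfn i₀).X) (embed ℓ) := by
  have hkey (v : V.X) :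
      ∃ t, stageKey i₀ (embed ℓ v) = toLex (π v, toLex (toLex (linePoint ℓ v), t)) := by
    unfold embed
    split_ifs with hv
    · exact ⟨⊥, by simp [stageKey, layer_linePoint hv]⟩
    · exact ⟨_, rfl⟩
  intro v v' h
  obtain ⟨t, ht⟩ := hkey v
  obtain ⟨t', ht'⟩ := hkey v'
  show stageKey i₀ (embed ℓ v) < stageKey i₀ (embed ℓ v')
  rw [ht, ht', Prod.Lex.toLex_lt_toLex']
  exact ⟨hπ h.le, fun hvv' => Prod.Lex.toLex_lt_toLex.2 (.inl (toLex_linePoint_lt hvv' h ℓ))⟩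

theorem embed_isOrdHom (hτ : StrictMono τ) (hπ : Monotone π) (i₀ : ι)
    (ℓ : Line (CopyOver K π τ) ι) : IsOrdHom V (stage K π τ hfn i₀) (embed ℓ) := by
  refine ⟨embed_strictMono hπ i₀ ℓ, fun R η => ⟨fun hη => ⟨ℓ, η, hη, rfl⟩, ?_⟩, fun F γ => ?_⟩
  · rintro ⟨ℓ', η', hη', h⟩
    exact mem_rel_of_embed_comp_eq h hη'
  · funext v
    have hex : ∃ p : Line (CopyOver K π τ) ι × V.X, embed p.1 p.2 = embed ℓ v := ⟨(ℓ, v), rfl⟩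
    simp only [comp_apply, stage, dif_pos hex]
    exact (fn_comp_embed_eq hτ hex.choose_spec F γ).symm

end StageStructure

theorem exists_extension_color_const_on_pattern {L : FinLanguage} (K : OrdStr L) [Nonempty K.X]
    {V : OrdStr L} {N : ℕ} {π : V.X → Fin N} {τ : K.X → Fin N}
    (hfn : ∀ F : L.Fn, Nonempty (L.arF1 F) → Nonempty (L.arF2 F))
    (hπ : Monotone π) (hτ : StrictMono τ) {r : ℕ} (hr : 0 < r) :
    ∃ (W : OrdStr L) (πW : W.X → Fin N), Monotone πW ∧ ∀ χ : (K.X → W.X) → Fin r,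
      ∃ Φ : V.X → W.X, IsOrdHom V W Φ ∧ πW ∘ Φ = π ∧
        ∃ c, ∀ α : K.X → V.X, IsOrdHom K V α → π ∘ α = τ → χ (Φ ∘ α) = c := by
  obtain ⟨ι, _, hHJ⟩ := Line.exists_mono_in_high_dimension (CopyOver K π τ) (Fin r)
  let _ : LinearOrder ι := LinearOrder.lift' (Finite.equivFin ι) (Finite.equivFin ι).injective
  obtain ⟨i₀, -⟩ := (hHJ fun _ => ⟨0, hr⟩).choose.proper
  refine ⟨stage K π τ hfn i₀, stageLayer i₀, stageLayer_monotone i₀, fun χ => ?_⟩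
  obtain ⟨ℓ, c, hc⟩ := hHJ fun w => χ (wordCopy w)
  refine ⟨embed ℓ, embed_isOrdHom hτ hπ i₀ ℓ, funext (stageLayer_embed i₀ ℓ), c,
    fun α hα hατ => ?_⟩
  exact (congrArg χ (embed_comp_copy hτ ℓ ⟨α, hα, hατ⟩)).trans (hc _)

theorem exists_extension_color_factors_through_pattern {L : FinLanguage} (K : OrdStr L)
    [Nonempty K.X]
    (hfn : ∀ F : L.Fn, Nonempty (L.arF1 F) → Nonempty (L.arF2 F)) {N r : ℕ} (hr : 0 < r)
    (s : Finset (K.X → Fin N)) (hs : ∀ τ ∈ s, StrictMono τ) {V : OrdStr L} {π : V.X → Fin N}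
    (hπ : Monotone π) :
    ∃ (W : OrdStr L) (πW : W.X → Fin N), Monotone πW ∧ ∀ χ : (K.X → W.X) → Fin r,
      ∃ Ψ : V.X → W.X, IsOrdHom V W Ψ ∧ πW ∘ Ψ = π ∧ ∃ κ : (K.X → Fin N) → Fin r,
        ∀ α : K.X → V.X, IsOrdHom K V α → π ∘ α ∈ s → χ (Ψ ∘ α) = κ (π ∘ α) := by
  classical
  induction s using Finset.induction_on generalizing V with
  | empty => exact ⟨V, π, hπ, fun _ => ⟨id, .id V, rfl, fun _ => ⟨0, hr⟩, by simp⟩⟩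
  | insert τ s _ ih =>
    obtain ⟨V₁, π₁, hπ₁, hV₁⟩ :=
      exists_extension_color_const_on_pattern K hfn hπ (hs τ (s.mem_insert_self τ)) hr
    obtain ⟨W, πW, hπW, hW⟩ := ih (fun τ' hτ' => hs τ' (s.mem_insert_of_mem hτ')) hπ₁
    refine ⟨W, πW, hπW, fun χ => ?_⟩
    obtain ⟨Ψ, hΨ, hπΨ, κ, hκ⟩ := hW χ
    obtain ⟨Φ, hΦ, hπΦ, c, hc⟩ := hV₁ fun u => χ (Ψ ∘ u)
    refine ⟨Ψ ∘ Φ, hΨ.comp hΦ, by rw [← comp_assoc, hπΨ, hπΦ], update κ τ c, fun α hα hαs => ?_⟩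
    rcases Finset.mem_insert.1 hαs with hατ | hαs
    · rw [hατ, update_self, comp_assoc]
      exact hc α hα hατ
    · have hατ : π ∘ α ≠ τ := fun h => ‹τ ∉ s› (h ▸ hαs)
      rw [update_of_ne hατ, comp_assoc, hκ (Φ ∘ α) (hΦ.comp hα) (by rwa [← comp_assoc, hπΦ]),
        ← comp_assoc, hπΦ]

section Placements

variable {L : FinLanguage} (M : OrdStr L) (N : ℕ)

noncomputable def placements : OrdStr L where
  X := {σ : M.X → Fin N // StrictMono σ} × M.X
  fin := inferInstance
  ord := LinearOrder.lift' (fun p => toLex (p.1.1 p.2, toLex (Finite.equivFin _ p.1, p.2)))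
    fun p q h => by
      simp only [Prod.mk.injEq, EmbeddingLike.apply_eq_iff_eq] at h
      exact Prod.ext h.2.1 h.2.2
  rel R := {θ | ∃ σ η, η ∈ M.rel R ∧ θ = Prod.mk σ ∘ η}
  fn F γ p := M.fn F (γ ∘ Prod.mk p.1) p.2

def placementsLayer (p : (placements M N).X) : Fin N := p.1.1 p.2

theorem placementsLayer_monotone : Monotone (placementsLayer M N) :=
  fun _ _ h => Prod.Lex.monotone_fst _ _ h

def placementCopy (σ : {σ : M.X → Fin N // StrictMono σ}) : M.X → (placements M N).X :=
  Prod.mk σ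

theorem placementCopy_isOrdHom (σ : {σ : M.X → Fin N // StrictMono σ}) :
    IsOrdHom M (placements M N) (placementCopy M N σ) := by
  refine ⟨fun x y h => Prod.Lex.toLex_lt_toLex.2 (.inl (σ.2 h)),
    fun R η => ⟨fun hη => ⟨σ, η, hη, rfl⟩, ?_⟩, fun _ _ => rfl⟩
  rintro ⟨σ', η', hη', h⟩
  obtain rfl : η = η' := funext fun u => (Prod.ext_iff.1 (congrFun h u)).2
  exact hη'

end Placements

/-- **Solecki's direct theorem**: for any `Fin`-language `ℒ`, the category
`(ℒ, (Fin, ≤))` of finite linearly ordered `ℒ`-structures with increasing injective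
homomorphisms has the Ramsey property. -/
theorem solecki_direct (L : FinLanguage) (K M : OrdStr L) (r : ℕ) (hr : 0 < r) :
    ∃ Z : OrdStr L, ∀ χ : (K.X → Z.X) → Fin r,
      ∃ g : M.X → Z.X, IsOrdHom M Z g ∧
        ∃ c : Fin r, ∀ f : K.X → M.X, IsOrdHom K M f → χ (g ∘ f) = c := by
  rcases isEmpty_or_nonempty K.X with hK | hK
  · exact ⟨M, fun χ => ⟨id, .id M, χ isEmptyElim, fun f _ => congrArg χ (Subsingleton.elim _ _)⟩⟩
  rcases isEmpty_or_nonempty M.X with hM | ⟨⟨m⟩⟩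
  · exact ⟨M, fun _ => ⟨id, .id M, ⟨0, hr⟩, fun f _ => isEmptyElim (f (Classical.arbitrary _))⟩⟩
  obtain ⟨N, hN⟩ := exists_ramseyArrow M.X K.X hr
  obtain ⟨Z, _, -, hZ⟩ := exists_extension_color_factors_through_pattern K
    (fun F ⟨a⟩ => ⟨M.fn F (fun _ => a) m⟩) hr (toFinite {τ : K.X → Fin N | StrictMono τ}).toFinset
    (fun _ => (Finite.mem_toFinset _).1) (placementsLayer_monotone M N)
  refine ⟨Z, fun χ => ?_⟩
  obtain ⟨Ψ, hΨ, -, κ, hκ⟩ := hZ χ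
  obtain ⟨σ, hσ, c, hc⟩ := hN κ
  have hσM := placementCopy_isOrdHom M N ⟨σ, hσ⟩
  refine ⟨Ψ ∘ placementCopy M N ⟨σ, hσ⟩, hΨ.comp hσM, c, fun f hf => ?_⟩
  exact (hκ _ (hσM.comp hf) ((Finite.mem_toFinset _).2 (hσ.comp hf.strictMono))).trans
    (hc f hf.strictMono)
end
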